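/- Let Λ = Λ_E be the (k+1)-graph associated to a Bratteli diagram of finite covering maps between row-finite locally convex k-graphs (Λ_v)_{v ∈ E^0}, and for each v ∈ E^0 let g_v : Λ_v^0 → [0,∞) be a graph trace on Λ_v. Define g : Λ^0 → [0,∞) by g(ι_v(u)) = g_v(u) for v ∈ E^0 and u ∈ Λ_v^0. Then g is a graph trace on Λ if and only if the collection (g_v) is compatible, i.e. g_v(u) = Σ_{e ∈ vE^1} Σ_{w ∈ Λ_{s(e)}^0, p_e(w) = u} g_{s(e)}(w) for all v ∈ E^0 and u ∈ Λ_v^0. -/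

import Mathlib

open scoped BigOperators NNReal ENNReal

/-- A `k`-graph: a countable small category presented on its set of morphisms,
with a range map, a source map, a (total, junk-valued on non-composable pairs)
composition, and a degree functor into `ℕ^k` satisfying the factorisation
property. -/
structure KGraph (k : ℕ) where
  M : Type
  countableM : Countable M
  nonemptyM : Nonempty M
  src : M → M
  rng : M → M
  comp : M → M → M
  deg : M → Fin k → ℕ
  src_src : ∀ x, src (src x) = src x
  rng_src : ∀ x, rng (src x) = src x
  src_rng : ∀ x, src (rng x) = rng x
  rng_rng : ∀ x, rng (rng x) = rng x
  comp_id : ∀ x, comp x (src x) = x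
  id_comp : ∀ x, comp (rng x) x = x
  src_comp : ∀ x y, src x = rng y → src (comp x y) = src y
  rng_comp : ∀ x y, src x = rng y → rng (comp x y) = rng x
  comp_assoc : ∀ x y z, src x = rng y → src y = rng z →
    comp (comp x y) z = comp x (comp y z)
  deg_src : ∀ x, deg (src x) = 0
  deg_rng : ∀ x, deg (rng x) = 0
  deg_comp : ∀ x y, src x = rng y → deg (comp x y) = deg x + deg y
  factor : ∀ (x : M) (m n : Fin k → ℕ), deg x = m + n →
    ∃! p : M × M, src p.1 = rng p.2 ∧ comp p.1 p.2 = x ∧ deg p.1 = m ∧ deg p.2 = n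

namespace KGraph

variable {k : ℕ} (Λ : KGraph k)

/-- The vertices (identity morphisms) of a `k`-graph. -/
def IsVertex (v : Λ.M) : Prop := Λ.rng v = v

/-- `Composable x y` means the composition `x ∘ y` (i.e. the path `xy`) is defined. -/
def Composable (x y : Λ.M) : Prop := Λ.src x = Λ.rng y

/-- The type of vertices of `Λ`. -/
def Vtx := {v : Λ.M // Λ.IsVertex v}

theorem isVertex_src (x : Λ.M) : Λ.IsVertex (Λ.src x) := Λ.rng_src x

theorem isVertex_rng (x : Λ.M) : Λ.IsVertex (Λ.rng x) := Λ.rng_rng x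

/-- The source of a morphism, as a vertex. -/
def srcV (x : Λ.M) : Λ.Vtx := ⟨Λ.src x, Λ.isVertex_src x⟩

/-- The set `vΛ^{≤ n}`. -/
def leSet (v : Λ.M) (n : Fin k → ℕ) : Set Λ.M :=
  {x | Λ.rng x = v ∧ Λ.deg x ≤ n ∧
    ∀ i : Fin k, Λ.deg x + Pi.single i 1 ≤ n →
      ¬∃ y, Λ.rng y = Λ.src x ∧ Λ.deg y = Pi.single i 1}

/-- A `k`-graph is row-finite if `vΛ^n` is finite for every vertex `v` and `n ∈ ℕ^k`. -/
def RowFinite : Prop :=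
  ∀ (v : Λ.M) (n : Fin k → ℕ), Λ.IsVertex v → {x | Λ.rng x = v ∧ Λ.deg x = n}.Finite

/-- A `k`-graph is locally convex if whenever `i < j`, `e ∈ Λ^{e_i}`, `f ∈ Λ^{e_j}` and
`r e = r f`, both `e` and `f` extend to paths of degree `e_i + e_j`. -/
def LocallyConvex : Prop :=
  ∀ (i j : Fin k), i < j → ∀ e f : Λ.M,
    Λ.deg e = Pi.single i 1 → Λ.deg f = Pi.single j 1 → Λ.rng e = Λ.rng f →
    (∃ e', Λ.Composable e e' ∧ Λ.deg e' = Pi.single j 1) ∧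
    (∃ f', Λ.Composable f f' ∧ Λ.deg f' = Pi.single i 1)

/-- `Λ^{min}(x,y)`: the pairs `(α, β)` with `xα = yβ` of degree `d x ⊔ d y`. -/
def MinExt (x y : Λ.M) : Set (Λ.M × Λ.M) :=
  {p | Λ.Composable x p.1 ∧ Λ.Composable y p.2 ∧
    Λ.comp x p.1 = Λ.comp y p.2 ∧ Λ.deg (Λ.comp x p.1) = Λ.deg x ⊔ Λ.deg y}

/-- A subset `E ⊆ vΛ` is exhaustive if every `x ∈ vΛ` has a minimal common extension
with some element of `E`. -/
def Exhaustive (v : Λ.M) (E : Set Λ.M) : Prop :=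
  ∀ x, Λ.rng x = v → ∃ μ ∈ E, (Λ.MinExt x μ).Nonempty

/-- A graph trace on `Λ`. -/
def IsGraphTrace (g : Λ.Vtx → ℝ≥0) : Prop :=
  ∀ (v : Λ.Vtx) (n : Fin k → ℕ), g v = ∑ᶠ x ∈ Λ.leSet v.1 n, g (Λ.srcV x)

/-- A `𝕋`-valued `2`-cocycle on `Λ`, presented as a `ℂ`-valued function that is
unimodular on composable pairs. -/
def IsTCocycle (c : Λ.M → Λ.M → ℂ) : Prop :=
  (∀ x y, Λ.Composable x y → ‖c x y‖ = 1) ∧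
  (∀ x y, Λ.IsVertex x ∨ Λ.IsVertex y → c x y = 1) ∧
  (∀ x y z, Λ.Composable x y → Λ.Composable y z →
    c x y * c (Λ.comp x y) z = c y z * c x (Λ.comp y z))

/-- A Cuntz–Krieger `(Λ, c)`-family in a `C*`-algebra `B`: relations (CK1)–(CK4). -/
def IsCKFamily {B : Type*} [NonUnitalCStarAlgebra B] [NormedSpace ℂ B]
    (c : Λ.M → Λ.M → ℂ) (s : Λ.M → B) : Prop :=
  (∀ v, Λ.IsVertex v → star (s v) = s v ∧ s v * s v = s v) ∧
  (∀ v w, Λ.IsVertex v → Λ.IsVertex w → v ≠ w → s v * s w = 0) ∧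
  (∀ x y, Λ.Composable x y → s x * s y = c x y • s (Λ.comp x y)) ∧
  (∀ x, star (s x) * s x = s (Λ.src x)) ∧
  (∀ (v : Λ.M) (n : Fin k → ℕ), Λ.IsVertex v →
    s v = ∑ᶠ x ∈ Λ.leSet v n, s x * star (s x))

end KGraph
attribute [local instance] Classical.propDecidable

namespace KGraph

variable {k : ℕ}

/-- An `A`-valued (categorical) `2`-cocycle on a `k`-graph, encoded as a total
function that vanishes on non-composable pairs and on pairs involving an
identity morphism, and satisfies the cocycle identity on composable triples. -/
def IsCocycle2 (Λ : KGraph k) {A : Type*} [AddCommGroup A] (c : Λ.M → Λ.M → A) : Prop :=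
  (∀ x y, ¬Λ.Composable x y → c x y = 0) ∧
  (∀ x y, Λ.IsVertex x ∨ Λ.IsVertex y → c x y = 0) ∧
  (∀ x y z, Λ.Composable x y → Λ.Composable y z →
    c x y + c (Λ.comp x y) z = c y z + c x (Λ.comp y z))

/-- The group `Z²(Λ, A)` of `A`-valued `2`-cocycles on `Λ`. -/
def Z2 (Λ : KGraph k) (A : Type*) [AddCommGroup A] : AddSubgroup (Λ.M → Λ.M → A) where
  carrier := {c | Λ.IsCocycle2 c}
  zero_mem' := by
    refine ⟨fun _ _ _ => rfl, fun _ _ _ => rfl, fun _ _ _ _ _ => rfl⟩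
  add_mem' := by
    rintro c d ⟨hc1, hc2, hc3⟩ ⟨hd1, hd2, hd3⟩
    refine ⟨fun x y h => ?_, fun x y h => ?_, fun x y z h1 h2 => ?_⟩
    · simp [hc1 x y h, hd1 x y h]
    · simp [hc2 x y h, hd2 x y h]
    · simp only [Pi.add_apply]
      rw [add_add_add_comm, hc3 x y z h1 h2, hd3 x y z h1 h2, add_add_add_comm]
  neg_mem' := by
    rintro c ⟨hc1, hc2, hc3⟩
    refine ⟨fun x y h => ?_, fun x y h => ?_, fun x y z h1 h2 => ?_⟩
    · simp [hc1 x y h]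
    · simp [hc2 x y h]
    · simp only [Pi.neg_apply]
      rw [← neg_add, ← neg_add, hc3 x y z h1 h2]

/-- A `1`-cochain: a function on morphisms vanishing on the identity morphisms. -/
def IsCochain1 (Λ : KGraph k) {A : Type*} [AddCommGroup A] (b : Λ.M → A) : Prop :=
  ∀ v, Λ.IsVertex v → b v = 0

/-- The coboundary `δ¹ b` of a `1`-cochain `b`. -/
noncomputable def delta1 (Λ : KGraph k) {A : Type*} [AddCommGroup A] (b : Λ.M → A) :
    Λ.M → Λ.M → A :=
  fun x y => if Λ.Composable x y then b x + b y - b (Λ.comp x y) else 0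

/-- The group `B²(Λ, A)` of `A`-valued `2`-coboundaries on `Λ`. -/
noncomputable def B2 (Λ : KGraph k) (A : Type*) [AddCommGroup A] :
    AddSubgroup (Λ.M → Λ.M → A) where
  carrier := {c | ∃ b, Λ.IsCochain1 b ∧ c = Λ.delta1 b}
  zero_mem' := ⟨0, fun _ _ => rfl, by
    funext x y
    simp [delta1]⟩
  add_mem' := by
    rintro c d ⟨b, hb, rfl⟩ ⟨b', hb', rfl⟩
    refine ⟨b + b', fun v hv => by simp [hb v hv, hb' v hv], ?_⟩
    funext x y
    simp only [Pi.add_apply, delta1]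
    split <;> [abel; simp]
  neg_mem' := by
    rintro c ⟨b, hb, rfl⟩
    refine ⟨-b, fun v hv => by simp [hb v hv], ?_⟩
    funext x y
    simp only [Pi.neg_apply, delta1]
    split <;> [abel; simp]

/-- The second (categorical) cohomology group `H²(Λ, A) = Z²(Λ,A)/B²(Λ,A)`. -/
noncomputable def H2 (Λ : KGraph k) (A : Type*) [AddCommGroup A] :=
  Z2 Λ A ⧸ (B2 Λ A).addSubgroupOf (Z2 Λ A)

noncomputable instance (Λ : KGraph k) (A : Type*) [AddCommGroup A] :
    AddCommGroup (H2 Λ A) := by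
  unfold H2; infer_instance

/-- A covering of `k`-graphs: a surjective degree-preserving functor that restricts to
bijections `Γv → Λ p(v)` and `vΓ → p(v)Λ` on every vertex `v`. -/
def IsKGraphCovering (Γ Λ : KGraph k) (p : Γ.M → Λ.M) : Prop :=
  Function.Surjective p ∧
  (∀ x, Λ.src (p x) = p (Γ.src x)) ∧
  (∀ x, Λ.rng (p x) = p (Γ.rng x)) ∧
  (∀ x, Λ.deg (p x) = Γ.deg x) ∧
  (∀ x y, Γ.Composable x y → p (Γ.comp x y) = Λ.comp (p x) (p y)) ∧
  (∀ v, Γ.IsVertex v → Set.BijOn p {x | Γ.src x = v} {y | Λ.src y = p v}) ∧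
  (∀ v, Γ.IsVertex v → Set.BijOn p {x | Γ.rng x = v} {y | Λ.rng y = p v})

end KGraph

open KGraph

/-- The `(k+1)`-graph `Λ = lim (Λ_n, p_n)` associated to a covering sequence of
`k`-graphs, together with all its defining data: `L n` is the `k`-graph `Λ_{n+1}`
(so `L 0 = Λ₁`), `p n : Λ_{n+2} → Λ_{n+1}` are the coverings, `Lam` is the limit
`(k+1)`-graph, `ι n : Λ_{n+1} → Λ` are the injective functors, and `edge` is the
bijection of `⨆_{n ≥ 2} Λ_n^0` onto `Λ^{e_{k+1}}`, subject to the characterising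
properties (1)–(5). -/
structure CovSeqLimit (k : ℕ) where
  L : ℕ → KGraph k
  p : ∀ n, (L (n + 1)).M → (L n).M
  p_cov : ∀ n, IsKGraphCovering (L (n + 1)) (L n) (p n)
  Lam : KGraph (k + 1)
  ι : ∀ n, (L n).M → Lam.M
  ι_inj : ∀ n, Function.Injective (ι n)
  ι_src : ∀ n x, Lam.src (ι n x) = ι n ((L n).src x)
  ι_rng : ∀ n x, Lam.rng (ι n x) = ι n ((L n).rng x)
  ι_comp : ∀ n x y, (L n).Composable x y →
    Lam.comp (ι n x) (ι n y) = ι n ((L n).comp x y)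
  ι_deg : ∀ n x, Lam.deg (ι n x) = Fin.snoc ((L n).deg x) 0
  ι_disjoint : ∀ m n x y, ι m x = ι n y → m = n
  ι_union : ∀ z : Lam.M, Lam.deg z (Fin.last k) = 0 → ∃ n x, ι n x = z
  edge : (Σ n : ℕ, (L (n + 1)).M) → Lam.M
  edge_deg : ∀ q : Σ n, (L (n + 1)).M, (L (q.1 + 1)).IsVertex q.2 →
    Lam.deg (edge q) = Fin.snoc (fun _ : Fin k => 0) 1
  edge_injOn : Set.InjOn edge {q | (L (q.1 + 1)).IsVertex q.2}
  edge_surj : ∀ z : Lam.M, Lam.deg z = Fin.snoc (fun _ : Fin k => 0) 1 →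
    ∃ q, (L (q.1 + 1)).IsVertex q.2 ∧ edge q = z
  edge_src : ∀ (n) (v : (L (n + 1)).M), (L (n + 1)).IsVertex v →
    Lam.src (edge ⟨n, v⟩) = ι (n + 1) v
  edge_rng : ∀ (n) (v : (L (n + 1)).M), (L (n + 1)).IsVertex v →
    Lam.rng (edge ⟨n, v⟩) = ι n (p n v)
  edge_comm : ∀ (n) (x : (L (n + 1)).M),
    Lam.comp (edge ⟨n, (L (n + 1)).rng x⟩) (ι (n + 1) x) =
      Lam.comp (ι n (p n x)) (edge ⟨n, (L (n + 1)).src x⟩)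

namespace CovSeqLimit

variable {k : ℕ} (C : CovSeqLimit k)

/-- The iterated covering maps `p_{1,n} : Λ_n → Λ_1`. -/
def pIter : ∀ n, (C.L n).M → (C.L 0).M
  | 0 => id
  | n + 1 => pIter n ∘ C.p n

/-- A degree `d ∈ ℕ^{k+1}` lies in `ℕ e_{k+1}` iff its first `k` coordinates vanish. -/
def OnlyLast {k : ℕ} (d : Fin (k + 1) → ℕ) : Prop :=
  ∀ i : Fin k, d i.castSucc = 0

/-- The hypothesis that `ξ` assigns to each vertex `v` of `Λ` the path
`ξ_v ∈ Λ_1^0 Λ^{ℕ e_{k+1}} v`. -/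
def IsXi (ξ : C.Lam.M → C.Lam.M) : Prop :=
  ∀ v, C.Lam.IsVertex v → C.Lam.src (ξ v) = v ∧ OnlyLast (C.Lam.deg (ξ v)) ∧
    ∃ w, (C.L 0).IsVertex w ∧ C.Lam.rng (ξ v) = C.ι 0 w

/-- The hypothesis that `π : Λ → Λ₁` is the projection determined by the unique
factorisation `ξ_{r λ} λ = π(λ) β` with `π(λ) ∈ Λ₁` and `β ∈ Λ^{ℕ e_{k+1}}`. -/
def IsProjOnto (ξ : C.Lam.M → C.Lam.M) (π : C.Lam.M → (C.L 0).M) : Prop :=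
  ∀ x, ∃ β, OnlyLast (C.Lam.deg β) ∧ C.Lam.Composable (C.ι 0 (π x)) β ∧
    C.Lam.comp (ξ (C.Lam.rng x)) x = C.Lam.comp (C.ι 0 (π x)) β

/-- The map `π_* : Z²(Λ₁, A) → Z²(Λ, A)`, `π_* c (λ, μ) = c(π λ, π μ)`. -/
noncomputable def pfwd {A : Type*} [AddCommGroup A] (π : C.Lam.M → (C.L 0).M)
    (c : (C.L 0).M → (C.L 0).M → A) : C.Lam.M → C.Lam.M → A :=
  fun x y => if C.Lam.Composable x y then c (π x) (π y) else 0

/-- The restriction map `Z²(Λ, A) → Z²(Λ₁, A)`, `c ↦ c|_{Λ₁}`. -/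
def res {A : Type*} [AddCommGroup A] (c : C.Lam.M → C.Lam.M → A) :
    (C.L 0).M → (C.L 0).M → A :=
  fun x y => c (C.ι 0 x) (C.ι 0 y)

end CovSeqLimit
/-- A Bratteli diagram: a directed graph whose vertices are partitioned into finite
nonempty levels (level `n` here corresponds to `E_{n+1}^0` in the paper), each edge
pointing from a vertex at level `n+1` (its source) to one at level `n` (its range),
such that every vertex receives an edge and every vertex not at level `0` emits one. -/
structure BratteliDiagram where
  V : Type
  Edge : Type
  esrc : Edge → V
  erng : Edge → V
  level : V → ℕ
  level_src : ∀ e, level (esrc e) = level (erng e) + 1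
  level_finite : ∀ n, {v | level v = n}.Finite
  level_nonempty : ∀ n, ∃ v, level v = n
  rcv : ∀ v, ∃ e, erng e = v
  emit : ∀ v, level v ≠ 0 → ∃ e, esrc e = v

namespace BratteliDiagram

/-- A Bratteli diagram is singly connected if there is at most one edge between any
two vertices. -/
def SinglyConnected (E : BratteliDiagram) : Prop :=
  ∀ e f : E.Edge, E.erng e = E.erng f → E.esrc e = E.esrc f → e = f

/-- A graph trace on a Bratteli diagram. -/
def IsTrace (E : BratteliDiagram) (h : E.V → ℝ≥0) : Prop :=
  ∀ v, h v = ∑ᶠ e ∈ {e | E.erng e = v}, h (E.esrc e)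

/-- `HasPath E n v u`: there is a path of length `n` in `E` with range `v` and
source `u`. -/
def HasPath (E : BratteliDiagram) : ℕ → E.V → E.V → Prop
  | 0, v, u => v = u
  | n + 1, v, u => ∃ e, E.erng e = v ∧ HasPath E n (E.esrc e) u

/-- A Bratteli diagram is cofinal if for all `v, v'` there exists `n` such that the
source of every path of length `n` with range `v'` is connected to `v`. -/
def Cofinal (E : BratteliDiagram) : Prop :=
  ∀ v v' : E.V, ∃ n : ℕ, ∀ u : E.V, E.HasPath n v' u → ∃ m : ℕ, E.HasPath m v u

end BratteliDiagram

open KGraph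

/-- The `(k+1)`-graph `Λ_E` associated to a Bratteli diagram `E` of covering maps
`p_f : Λ_{s(f)} → Λ_{r(f)}` between `k`-graphs `(Λ_v)_{v ∈ E^0}`, together with its
defining data: injective functors `ι_v : Λ_v → Λ_E` and a bijection
`e : ⨆_{v ∉ E_1^0} Λ_v^0 × E^1 v → Λ_E^{e_{k+1}}` satisfying properties (1)–(5). -/
structure BCSLimit {k : ℕ} (E : BratteliDiagram) (Λv : E.V → KGraph k)
    (pe : ∀ f : E.Edge, (Λv (E.esrc f)).M → (Λv (E.erng f)).M) where
  Lam : KGraph (k + 1)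
  ι : ∀ v, (Λv v).M → Lam.M
  ι_inj : ∀ v, Function.Injective (ι v)
  ι_src : ∀ v x, Lam.src (ι v x) = ι v ((Λv v).src x)
  ι_rng : ∀ v x, Lam.rng (ι v x) = ι v ((Λv v).rng x)
  ι_comp : ∀ v x y, (Λv v).Composable x y →
    Lam.comp (ι v x) (ι v y) = ι v ((Λv v).comp x y)
  ι_deg : ∀ v x, Lam.deg (ι v x) = Fin.snoc ((Λv v).deg x) 0
  ι_disjoint : ∀ v u x y, ι v x = ι u y → v = u
  ι_union : ∀ z : Lam.M, Lam.deg z (Fin.last k) = 0 → ∃ v x, ι v x = z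
  edge : (Σ f : E.Edge, (Λv (E.esrc f)).M) → Lam.M
  edge_deg : ∀ q : Σ f : E.Edge, (Λv (E.esrc f)).M, (Λv (E.esrc q.1)).IsVertex q.2 →
    Lam.deg (edge q) = Fin.snoc (fun _ : Fin k => 0) 1
  edge_injOn : Set.InjOn edge {q | (Λv (E.esrc q.1)).IsVertex q.2}
  edge_surj : ∀ z : Lam.M, Lam.deg z = Fin.snoc (fun _ : Fin k => 0) 1 →
    ∃ q, (Λv (E.esrc q.1)).IsVertex q.2 ∧ edge q = z
  edge_src : ∀ (f : E.Edge) (x : (Λv (E.esrc f)).M), (Λv (E.esrc f)).IsVertex x →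
    Lam.src (edge ⟨f, x⟩) = ι (E.esrc f) x
  edge_rng : ∀ (f : E.Edge) (x : (Λv (E.esrc f)).M), (Λv (E.esrc f)).IsVertex x →
    Lam.rng (edge ⟨f, x⟩) = ι (E.erng f) (pe f x)
  edge_comm : ∀ (f : E.Edge) (x : (Λv (E.esrc f)).M),
    Lam.comp (edge ⟨f, (Λv (E.esrc f)).rng x⟩) (ι (E.esrc f) x) =
      Lam.comp (ι (E.erng f) (pe f x)) (edge ⟨f, (Λv (E.esrc f)).src x⟩)

/-!
Every vertex of `Λ_E` lies in exactly one `ι_v(Λ_v)` and receives an edge of degree `e_{k+1}`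
(the coverings are surjective and every vertex of `E` receives an edge). Hence every
`λ ∈ VΛ^{≤(m, l+1)}` factors uniquely as an edge `z ∈ VΛ^{e_{k+1}}` followed by an element of
`s(z)Λ^{≤(m, l)}`, and induction on `l` reduces the trace condition on `Λ_E` to two cases: degree
`(m, 0)`, where `ι_v(u)Λ^{≤(m,0)} = ι_v(uΛ_v^{≤m})` and it is the trace condition on `Λ_v`; and
degree `e_{k+1}`, where `ι_v(u)Λ^{≤e_{k+1}}` is the set of edges `e(x, f)` with `p_f(x) = u`, and
it is the compatibility condition.
-/

theorem Fin.snoc_le_snoc_iff {k : ℕ} {α : Type*} [LE α] {a c : Fin k → α} {b d : α} :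
    (Fin.snoc a b : Fin (k + 1) → α) ≤ Fin.snoc c d ↔ a ≤ c ∧ b ≤ d := by
  simp only [Pi.le_def, Fin.forall_fin_succ', Fin.snoc_castSucc, Fin.snoc_last]

theorem Fin.snoc_add_snoc {k : ℕ} {α : Type*} [Add α] (a c : Fin k → α) (b d : α) :
    (Fin.snoc a b : Fin (k + 1) → α) + Fin.snoc c d = Fin.snoc (a + c) (b + d) := by
  ext i
  refine Fin.lastCases ?_ (fun j => ?_) i <;> simp

theorem Pi.single_castSucc {k : ℕ} {α : Type*} [Zero α] (j : Fin k) (x : α) :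
    (Pi.single j.castSucc x : Fin (k + 1) → α) = Fin.snoc (Pi.single j x) 0 := by
  ext i
  refine Fin.lastCases ?_ (fun i => ?_) i
  · simp [(Fin.castSucc_lt_last j).ne]
  · simp [Pi.single_apply, Fin.castSucc_inj]

theorem Pi.single_last {k : ℕ} {α : Type*} [Zero α] (x : α) :
    (Pi.single (Fin.last k) x : Fin (k + 1) → α) = Fin.snoc 0 x := by
  ext i
  refine Fin.lastCases ?_ (fun i => ?_) i
  · simp
  · simp [(Fin.castSucc_lt_last i).ne]

theorem Pi.single_last_add_snoc {k : ℕ} (m : Fin k → ℕ) (l : ℕ) :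
    (Pi.single (Fin.last k) 1 : Fin (k + 1) → ℕ) + Fin.snoc m l = Fin.snoc m (l + 1) := by
  rw [Pi.single_last, Fin.snoc_add_snoc, zero_add, Nat.add_comm 1 l]

namespace KGraph

variable {k : ℕ} (Λ : KGraph k)

/-- `vΛ^n`. -/
def degSet (v : Λ.M) (n : Fin k → ℕ) : Set Λ.M :=
  {x | Λ.rng x = v ∧ Λ.deg x = n}

def NoSourcesOfColor (i : Fin k) : Prop :=
  ∀ v, Λ.IsVertex v → (Λ.degSet v (Pi.single i 1)).Nonempty

variable {Λ}

theorem src_eq_self_of_isVertex {v : Λ.M} (hv : Λ.IsVertex v) : Λ.src v = v := by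
  rw [← hv, Λ.src_rng, hv]

theorem deg_eq_zero_of_isVertex {v : Λ.M} (hv : Λ.IsVertex v) : Λ.deg v = 0 := by
  rw [← hv, Λ.deg_rng]

theorem leSet_finite (hrf : Λ.RowFinite) {v : Λ.M} (hv : Λ.IsVertex v) (n : Fin k → ℕ) :
    (Λ.leSet v n).Finite :=
  ((Set.finite_Iic n).biUnion fun m _ => hrf v m hv).subset
    fun _ ⟨hr, hle, _⟩ => Set.mem_biUnion hle ⟨hr, rfl⟩

theorem eq_of_comp_eq_comp {z x z' x' : Λ.M} (hc : Λ.Composable z x)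
    (hc' : Λ.Composable z' x') (hd : Λ.deg z = Λ.deg z')
    (h : Λ.comp z x = Λ.comp z' x') : z = z' ∧ x = x' := by
  have hdx : Λ.deg x = Λ.deg x' := by
    have := Λ.deg_comp z x hc
    rw [h, Λ.deg_comp z' x' hc', hd] at this
    exact (add_left_cancel this).symm
  obtain ⟨_, _, huniq⟩ := Λ.factor (Λ.comp z x) (Λ.deg z) (Λ.deg x) (Λ.deg_comp z x hc)
  have := (huniq (z, x) ⟨hc, rfl, rfl, rfl⟩).trans
    (huniq (z', x') ⟨hc', h.symm, hd.symm, hdx.symm⟩).symm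
  exact Prod.ext_iff.mp this

theorem comp_mem_leSet_iff {z x : Λ.M} (hc : Λ.Composable z x) (n : Fin k → ℕ) :
    Λ.comp z x ∈ Λ.leSet (Λ.rng z) (Λ.deg z + n) ↔ x ∈ Λ.leSet (Λ.src z) n := by
  simp only [leSet, Set.mem_ofPred_eq, Λ.rng_comp z x hc, Λ.src_comp z x hc,
    Λ.deg_comp z x hc, add_assoc, add_le_add_iff_left, hc.symm, true_and]

theorem deg_apply_eq_of_mem_leSet {i : Fin k} (hi : Λ.NoSourcesOfColor i)
    {v x : Λ.M} {n : Fin k → ℕ} (hx : x ∈ Λ.leSet v n) : Λ.deg x i = n i := by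
  obtain ⟨-, hle, hmax⟩ := hx
  refine (hle i).antisymm (not_lt.mp fun hlt => hmax i (fun j => ?_) (hi _ (Λ.isVertex_src x)))
  rcases eq_or_ne j i with rfl | hj
  · simpa using hlt
  · simpa [hj] using hle j

theorem leSet_single_eq_degSet {i : Fin k} (hi : Λ.NoSourcesOfColor i) (v : Λ.M) :
    Λ.leSet v (Pi.single i 1) = Λ.degSet v (Pi.single i 1) := by
  ext x
  constructor
  · intro hx
    have hxi := deg_apply_eq_of_mem_leSet hi hx
    refine ⟨hx.1, funext fun j => ?_⟩
    rcases eq_or_ne j i with rfl | hj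
    · simpa using hxi
    · simpa [hj] using hx.2.1 j
  · rintro ⟨hr, hd⟩
    refine ⟨hr, hd.le, fun j hj => absurd (hj j) ?_⟩
    simp [hd]

theorem leSet_single_add {i : Fin k} (hi : Λ.NoSourcesOfColor i) (v : Λ.M)
    (n : Fin k → ℕ) :
    Λ.leSet v (Pi.single i 1 + n) =
      ⋃ z ∈ Λ.degSet v (Pi.single i 1), Λ.comp z '' Λ.leSet (Λ.src z) n := by
  ext x
  simp only [Set.mem_iUnion, Set.mem_image, exists_prop]
  constructor
  · intro hx
    have hle : Pi.single i 1 ≤ Λ.deg x := by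
      intro j
      rcases eq_or_ne j i with rfl | hj
      · simp [deg_apply_eq_of_mem_leSet hi hx]
      · simp [hj]
    obtain ⟨⟨z, y⟩, ⟨hc, rfl, hz, -⟩, -⟩ :=
      Λ.factor x (Pi.single i 1) (Λ.deg x - Pi.single i 1) (add_tsub_cancel_of_le hle).symm
    have hr : Λ.rng z = v := by rw [← Λ.rng_comp z y hc]; exact hx.1
    refine ⟨z, ⟨hr, hz⟩, y, (comp_mem_leSet_iff hc n).mp ?_, rfl⟩
    rwa [hr, hz]
  · rintro ⟨z, ⟨rfl, hz⟩, y, hy, rfl⟩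
    rw [← hz]
    exact (comp_mem_leSet_iff hy.1.symm n).mpr hy

theorem finsum_leSet_single_add {β : Type*} [AddCommMonoid β] (φ : Λ.Vtx → β) {i : Fin k}
    (hi : Λ.NoSourcesOfColor i) {v : Λ.M} {n : Fin k → ℕ}
    (hZ : (Λ.degSet v (Pi.single i 1)).Finite)
    (hfin : ∀ z ∈ Λ.degSet v (Pi.single i 1), (Λ.leSet (Λ.src z) n).Finite) :
    ∑ᶠ x ∈ Λ.leSet v (Pi.single i 1 + n), φ (Λ.srcV x) =
      ∑ᶠ z ∈ Λ.degSet v (Pi.single i 1), ∑ᶠ x ∈ Λ.leSet (Λ.src z) n, φ (Λ.srcV x) := by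
  rw [leSet_single_add hi, finsum_mem_biUnion ?_ hZ fun z hz => (hfin z hz).image _]
  · refine finsum_mem_congr rfl fun z _ => ?_
    rw [finsum_mem_image fun x hx y hy hxy => (eq_of_comp_eq_comp hx.1.symm hy.1.symm rfl hxy).2]
    exact finsum_mem_congr rfl fun x hx => congrArg φ (Subtype.ext (Λ.src_comp z x hx.1.symm))
  · intro z hz z' hz' hne
    refine Set.disjoint_left.mpr ?_
    rintro _ ⟨x, hx, rfl⟩ ⟨x', hx', he⟩
    exact hne (eq_of_comp_eq_comp hx'.1.symm hx.1.symm (hz'.2.trans hz.2.symm) he).1.symm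

theorem IsGraphTrace.eq_finsum_degSet {g : Λ.Vtx → ℝ≥0} (hg : Λ.IsGraphTrace g) {i : Fin k}
    (hi : Λ.NoSourcesOfColor i) (v : Λ.Vtx) :
    g v = ∑ᶠ z ∈ Λ.degSet v.1 (Pi.single i 1), g (Λ.srcV z) := by
  rw [hg v (Pi.single i 1), leSet_single_eq_degSet hi]

end KGraph

theorem BratteliDiagram.finite_setOf_erng_eq {E : BratteliDiagram} (hsc : E.SinglyConnected)
    (v : E.V) : {f | E.erng f = v}.Finite := by
  refine Set.Finite.of_finite_image ((E.level_finite (E.level v + 1)).subset ?_)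
    fun f hf f' hf' h => hsc f f' (hf.trans hf'.symm) h
  rintro _ ⟨f, hf, rfl⟩
  simp only [Set.mem_ofPred_eq] at hf ⊢
  rw [E.level_src, hf]

namespace BCSLimit

variable {k : ℕ} {E : BratteliDiagram} {Λv : E.V → KGraph k}
  {pe : ∀ f : E.Edge, (Λv (E.esrc f)).M → (Λv (E.erng f)).M} (L : BCSLimit E Λv pe)

theorem isVertex_ι {v : E.V} {u : (Λv v).M} (hu : (Λv v).IsVertex u) :
    L.Lam.IsVertex (L.ι v u) := by
  rw [KGraph.IsVertex, L.ι_rng, hu]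

def ιVtx (v : E.V) (u : (Λv v).Vtx) : L.Lam.Vtx :=
  ⟨L.ι v u.1, L.isVertex_ι u.2⟩

theorem exists_eq_ι_of_rng_eq_ι {y : L.Lam.M} (hy : L.Lam.deg y (Fin.last k) = 0)
    {v : E.V} {u : (Λv v).M} (hr : L.Lam.rng y = L.ι v u) :
    ∃ β, (Λv v).rng β = u ∧ y = L.ι v β := by
  obtain ⟨w, β, rfl⟩ := L.ι_union y hy
  rw [L.ι_rng] at hr
  obtain rfl := L.ι_disjoint _ _ _ _ hr
  exact ⟨β, L.ι_inj w hr, rfl⟩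

theorem exists_eq_ι_of_isVertex {V : L.Lam.M} (hV : L.Lam.IsVertex V) :
    ∃ v u, (Λv v).IsVertex u ∧ V = L.ι v u := by
  obtain ⟨v, u, rfl⟩ := L.ι_union V (by simp [KGraph.deg_eq_zero_of_isVertex hV])
  refine ⟨v, u, L.ι_inj v ?_, rfl⟩
  rw [← L.ι_rng]
  exact hV

theorem exists_rng_eq_ι_deg_eq_snoc_iff {v : E.V} (w : (Λv v).M) (d : Fin k → ℕ) :
    (∃ y, L.Lam.rng y = L.ι v w ∧ L.Lam.deg y = Fin.snoc d 0) ↔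
      ∃ β, (Λv v).rng β = w ∧ (Λv v).deg β = d := by
  constructor
  · rintro ⟨y, hr, hd⟩
    obtain ⟨β, hβ, rfl⟩ := L.exists_eq_ι_of_rng_eq_ι (by simp [hd]) hr
    rw [L.ι_deg] at hd
    exact ⟨β, hβ, (Fin.snoc_inj.mp hd).1⟩
  · rintro ⟨β, hr, hd⟩
    exact ⟨L.ι v β, by rw [L.ι_rng, hr], by rw [L.ι_deg, hd]⟩

theorem ι_mem_leSet_iff {v : E.V} {u α : (Λv v).M} (m : Fin k → ℕ) :
    L.ι v α ∈ L.Lam.leSet (L.ι v u) (Fin.snoc m 0) ↔ α ∈ (Λv v).leSet u m := by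
  simp only [KGraph.leSet, Set.mem_ofPred_eq, L.ι_rng, L.ι_src, L.ι_deg, (L.ι_inj v).eq_iff,
    Fin.forall_fin_succ', Pi.single_castSucc, Pi.single_last, Fin.snoc_add_snoc,
    Fin.snoc_le_snoc_iff, L.exists_rng_eq_ι_deg_eq_snoc_iff, add_zero]
  simp

theorem leSet_snoc_zero (v : E.V) (u : (Λv v).M) (m : Fin k → ℕ) :
    L.Lam.leSet (L.ι v u) (Fin.snoc m 0) = L.ι v '' (Λv v).leSet u m := by
  ext x
  constructor
  · intro hx
    have hlast : L.Lam.deg x (Fin.last k) = 0 := by simpa using hx.2.1 (Fin.last k)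
    obtain ⟨α, -, rfl⟩ := L.exists_eq_ι_of_rng_eq_ι hlast hx.1
    exact ⟨α, (L.ι_mem_leSet_iff m).mp hx, rfl⟩
  · rintro ⟨α, hα, rfl⟩
    exact (L.ι_mem_leSet_iff m).mpr hα

theorem noSourcesOfColor_last
    (hcov : ∀ f, IsKGraphCovering (Λv (E.esrc f)) (Λv (E.erng f)) (pe f)) :
    L.Lam.NoSourcesOfColor (Fin.last k) := by
  intro V hV
  obtain ⟨v, u, hu, rfl⟩ := L.exists_eq_ι_of_isVertex hV
  obtain ⟨f, rfl⟩ := E.rcv v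
  obtain ⟨x, hx⟩ := (hcov f).1 u
  have hsx := (Λv (E.esrc f)).isVertex_src x
  refine ⟨L.edge ⟨f, (Λv _).src x⟩, ?_, ?_⟩
  · rw [L.edge_rng f _ hsx, ← (hcov f).2.1, hx, KGraph.src_eq_self_of_isVertex hu]
  · rw [L.edge_deg ⟨f, _⟩ hsx, Pi.single_last]
    rfl

theorem degSet_ι_single_last (v : E.V) (u : (Λv v).M) :
    L.Lam.degSet (L.ι v u) (Pi.single (Fin.last k) 1) =
      ⋃ f ∈ {f | E.erng f = v},
        (fun x : (Λv (E.esrc f)).Vtx => L.edge ⟨f, x.1⟩) ''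
          {x | L.ι (E.erng f) (pe f x.1) = L.ι v u} := by
  ext z
  simp only [Set.mem_iUnion, Set.mem_image, Set.mem_ofPred_eq, exists_prop]
  constructor
  · rintro ⟨hr, hd⟩
    obtain ⟨⟨f, w⟩, hw, rfl⟩ := L.edge_surj z (by rw [hd, Pi.single_last]; rfl)
    have hrng := (L.edge_rng f w hw).symm.trans hr
    exact ⟨f, L.ι_disjoint _ _ _ _ hrng, ⟨w, hw⟩, hrng, rfl⟩
  · rintro ⟨f, -, x, hx, rfl⟩
    exact ⟨(L.edge_rng f x.1 x.2).trans hx, by rw [L.edge_deg ⟨f, x.1⟩ x.2, Pi.single_last]; rfl⟩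

theorem finite_fiber
    (hcov : ∀ f, IsKGraphCovering (Λv (E.esrc f)) (Λv (E.erng f)) (pe f))
    (hfin : ∀ (f : E.Edge) (u : (Λv (E.erng f)).M), (Λv (E.erng f)).IsVertex u →
      {x | pe f x = u}.Finite)
    (f : E.Edge) {v : E.V} (u : (Λv v).M) :
    {x : (Λv (E.esrc f)).Vtx | L.ι (E.erng f) (pe f x.1) = L.ι v u}.Finite := by
  rcases Set.eq_empty_or_nonempty
    {x : (Λv (E.esrc f)).Vtx | L.ι (E.erng f) (pe f x.1) = L.ι v u} with h | ⟨x₀, hx₀⟩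
  · exact h ▸ Set.finite_empty
  have hv : (Λv (E.erng f)).IsVertex (pe f x₀.1) := by
    rw [KGraph.IsVertex, (hcov f).2.2.1, x₀.2]
  refine ((hfin f _ hv).preimage Subtype.val_injective.injOn).subset fun x hx => ?_
  exact L.ι_inj _ (hx.trans hx₀.symm)

theorem finite_degSet_single_last (hsc : E.SinglyConnected)
    (hcov : ∀ f, IsKGraphCovering (Λv (E.esrc f)) (Λv (E.erng f)) (pe f))
    (hfin : ∀ (f : E.Edge) (u : (Λv (E.erng f)).M), (Λv (E.erng f)).IsVertex u →
      {x | pe f x = u}.Finite)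
    {V : L.Lam.M} (hV : L.Lam.IsVertex V) :
    (L.Lam.degSet V (Pi.single (Fin.last k) 1)).Finite := by
  obtain ⟨v, u, -, rfl⟩ := L.exists_eq_ι_of_isVertex hV
  rw [degSet_ι_single_last]
  exact (E.finite_setOf_erng_eq hsc v).biUnion fun f _ => (L.finite_fiber hcov hfin f u).image _

theorem finsum_degSet_ι_single_last (hsc : E.SinglyConnected)
    (hcov : ∀ f, IsKGraphCovering (Λv (E.esrc f)) (Λv (E.erng f)) (pe f))
    (hfin : ∀ (f : E.Edge) (u : (Λv (E.erng f)).M), (Λv (E.erng f)).IsVertex u →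
      {x | pe f x = u}.Finite)
    (g : L.Lam.Vtx → ℝ≥0) (v : E.V) (u : (Λv v).M) :
    ∑ᶠ z ∈ L.Lam.degSet (L.ι v u) (Pi.single (Fin.last k) 1), g (L.Lam.srcV z) =
      ∑ᶠ f ∈ {f | E.erng f = v},
        ∑ᶠ x ∈ {x : (Λv (E.esrc f)).Vtx | L.ι (E.erng f) (pe f x.1) = L.ι v u},
          g (L.ιVtx (E.esrc f) x) := by
  rw [degSet_ι_single_last, finsum_mem_biUnion ?_ (E.finite_setOf_erng_eq hsc v)
    fun f _ => (L.finite_fiber hcov hfin f u).image _]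
  · refine finsum_mem_congr rfl fun f _ => ?_
    rw [finsum_mem_image fun (x : (Λv (E.esrc f)).Vtx) _ y _ h =>
      Subtype.ext (eq_of_heq (Sigma.mk.inj_iff.mp
        (L.edge_injOn (x₁ := ⟨f, x.1⟩) (x₂ := ⟨f, y.1⟩) x.2 y.2 h)).2)]
    exact finsum_mem_congr rfl fun x _ => congrArg g (Subtype.ext (L.edge_src f x.1 x.2))
  · intro f _ f' _ hne
    refine Set.disjoint_left.mpr ?_
    rintro _ ⟨x, -, rfl⟩ ⟨x', -, he⟩
    exact hne (congrArg Sigma.fst (L.edge_injOn x'.2 x.2 he)).symm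

theorem finite_leSet (hsc : E.SinglyConnected)
    (hcov : ∀ f, IsKGraphCovering (Λv (E.esrc f)) (Λv (E.erng f)) (pe f))
    (hfin : ∀ (f : E.Edge) (u : (Λv (E.erng f)).M), (Λv (E.erng f)).IsVertex u →
      {x | pe f x = u}.Finite)
    (hrf : ∀ v, (Λv v).RowFinite) {V : L.Lam.M} (hV : L.Lam.IsVertex V) (n : Fin (k + 1) → ℕ) :
    (L.Lam.leSet V n).Finite := by
  rw [← Fin.snoc_init_self n]
  induction n (Fin.last k) generalizing V with
  | zero =>
    obtain ⟨v, u, hu, rfl⟩ := L.exists_eq_ι_of_isVertex hV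
    rw [leSet_snoc_zero]
    exact ((Λv v).leSet_finite (hrf v) hu _).image _
  | succ l ih =>
    rw [← Pi.single_last_add_snoc, KGraph.leSet_single_add (L.noSourcesOfColor_last hcov)]
    exact (L.finite_degSet_single_last hsc hcov hfin hV).biUnion fun z _ =>
      (ih (L.Lam.isVertex_src z)).image _

theorem isGraphTrace_of_comp_ιVtx (hsc : E.SinglyConnected)
    (hcov : ∀ f, IsKGraphCovering (Λv (E.esrc f)) (Λv (E.erng f)) (pe f))
    (hfin : ∀ (f : E.Edge) (u : (Λv (E.erng f)).M), (Λv (E.erng f)).IsVertex u →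
      {x | pe f x = u}.Finite)
    (hrf : ∀ v, (Λv v).RowFinite) {g : L.Lam.Vtx → ℝ≥0}
    (hhor : ∀ v, (Λv v).IsGraphTrace (g ∘ L.ιVtx v))
    (hvert : ∀ V : L.Lam.Vtx,
      g V = ∑ᶠ z ∈ L.Lam.degSet V.1 (Pi.single (Fin.last k) 1), g (L.Lam.srcV z)) :
    L.Lam.IsGraphTrace g := by
  intro V n
  rw [← Fin.snoc_init_self n]
  induction n (Fin.last k) generalizing V with
  | zero =>
    obtain ⟨v, u, hu, hV⟩ := L.exists_eq_ι_of_isVertex V.2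
    rw [congrArg g (Subtype.ext hV : V = L.ιVtx v ⟨u, hu⟩), hV, leSet_snoc_zero,
      finsum_mem_image (L.ι_inj v).injOn]
    refine (hhor v ⟨u, hu⟩ _).trans (finsum_mem_congr rfl fun α _ => ?_)
    exact congrArg g (Subtype.ext (L.ι_src v α)).symm
  | succ l ih =>
    rw [← Pi.single_last_add_snoc, KGraph.finsum_leSet_single_add _
      (L.noSourcesOfColor_last hcov) (L.finite_degSet_single_last hsc hcov hfin V.2)
      fun z _ => L.finite_leSet hsc hcov hfin hrf (L.Lam.isVertex_src z) _, hvert V]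
    exact finsum_mem_congr rfl fun z _ => ih (L.Lam.srcV z)

end BCSLimit

open KGraph in
theorem graphTrace_of_bratteli_iff_compatible_general {k : ℕ}
    (E : BratteliDiagram) (hsc : E.SinglyConnected)
    (Λv : E.V → KGraph k)
    (pe : ∀ f : E.Edge, (Λv (E.esrc f)).M → (Λv (E.erng f)).M)
    (hcov : ∀ f, IsKGraphCovering (Λv (E.esrc f)) (Λv (E.erng f)) (pe f))
    (hfin : ∀ (f : E.Edge) (u : (Λv (E.erng f)).M), (Λv (E.erng f)).IsVertex u →
      {x | pe f x = u}.Finite)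
    (hrf : ∀ v, (Λv v).RowFinite)
    (L : BCSLimit E Λv pe)
    (gv : ∀ v, (Λv v).Vtx → ℝ≥0) (hgv : ∀ v, (Λv v).IsGraphTrace (gv v))
    (g : L.Lam.Vtx → ℝ≥0)
    (hg : ∀ (v) (u : (Λv v).Vtx) (x : L.Lam.Vtx), x.1 = L.ι v u.1 → g x = gv v u) :
    L.Lam.IsGraphTrace g ↔
      ∀ (v) (u : (Λv v).Vtx),
        gv v u = ∑ᶠ f ∈ {f | E.erng f = v},
          ∑ᶠ x ∈ {x : (Λv (E.esrc f)).Vtx |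
              L.ι (E.erng f) (pe f x.1) = L.ι v u.1},
            gv (E.esrc f) x := by
  have hι : ∀ v, g ∘ L.ιVtx v = gv v := fun v => funext fun u => hg v u _ rfl
  have hvert : ∀ v (u : (Λv v).Vtx),
      ∑ᶠ z ∈ L.Lam.degSet (L.ι v u.1) (Pi.single (Fin.last k) 1), g (L.Lam.srcV z) =
        ∑ᶠ f ∈ {f | E.erng f = v}, ∑ᶠ x ∈ {x : (Λv (E.esrc f)).Vtx |
          L.ι (E.erng f) (pe f x.1) = L.ι v u.1}, gv (E.esrc f) x := by
    intro v u
    simp only [L.finsum_degSet_ι_single_last hsc hcov hfin, ← hι, Function.comp_apply]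
  constructor
  · intro htrace v u
    rw [← hvert, ← hι v, Function.comp_apply]
    exact htrace.eq_finsum_degSet (L.noSourcesOfColor_last hcov) _
  · intro hcompat
    refine L.isGraphTrace_of_comp_ιVtx hsc hcov hfin hrf (fun v => hι v ▸ hgv v) fun V => ?_
    obtain ⟨v, u, hu, hV⟩ := L.exists_eq_ι_of_isVertex V.2
    rw [hV]
    exact (hg v ⟨u, hu⟩ V hV).trans ((hcompat v _).trans (hvert v _).symm)

open KGraph in
/-- For the `(k+1)`-graph `Λ_E` of a Bratteli diagram of finite
covering maps between row-finite locally convex `k`-graphs, a family of graph traces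
`g_v` on the `Λ_v` assembles (via `g ∘ ι_v = g_v`) to a graph trace on `Λ_E` if and
only if the family is compatible. -/
theorem graphTrace_of_bratteli_iff_compatible {k : ℕ}
    (E : BratteliDiagram) (hsc : E.SinglyConnected)
    (Λv : E.V → KGraph k)
    (pe : ∀ f : E.Edge, (Λv (E.esrc f)).M → (Λv (E.erng f)).M)
    (hcov : ∀ f, IsKGraphCovering (Λv (E.esrc f)) (Λv (E.erng f)) (pe f))
    (hfin : ∀ (f : E.Edge) (u : (Λv (E.erng f)).M), (Λv (E.erng f)).IsVertex u →
      {x | pe f x = u}.Finite)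
    (hrf : ∀ v, (Λv v).RowFinite) (hlc : ∀ v, (Λv v).LocallyConvex)
    (L : BCSLimit E Λv pe)
    (gv : ∀ v, (Λv v).Vtx → ℝ≥0) (hgv : ∀ v, (Λv v).IsGraphTrace (gv v))
    (g : L.Lam.Vtx → ℝ≥0)
    (hg : ∀ (v) (u : (Λv v).Vtx) (x : L.Lam.Vtx), x.1 = L.ι v u.1 → g x = gv v u) :
    L.Lam.IsGraphTrace g ↔
      ∀ (v) (u : (Λv v).Vtx),
        gv v u = ∑ᶠ f ∈ {f | E.erng f = v},
          ∑ᶠ x ∈ {x : (Λv (E.esrc f)).Vtx |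
              L.ι (E.erng f) (pe f x.1) = L.ι v u.1},
            gv (E.esrc f) x :=
  graphTrace_of_bratteli_iff_compatible_general E hsc Λv pe hcov hfin hrf L gv hgv g hg
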